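/- Let X be a real Banach space, let A: X ⇉ X* be a maximally monotone linear relation, and let f: X → (−∞,+∞] be a proper lower semicontinuous convex function with 0 ∈ dom A ∩ int dom f. Suppose z ∈ X lies in the norm closure of dom A but not in dom A, and z lies in the norm closure of dom f. Then for every z* ∈ X* and every t ∈ (0,1), F_{A+∂f}(t z, t z*) ≥ t²⟨z, z*⟩. -/

import Mathlib

open NormedSpace Set Pointwise

variable {X : Type*} [NormedAddCommGroup X] [NormedSpace ℝ X]

/-- The graph of a set-valued operator `A : X ⇉ X*`. -/
def gra (A : X → Set (StrongDual ℝ X)) : Set (X × StrongDual ℝ X) := {p | p.2 ∈ A p.1}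

/-- The domain of a set-valued operator. -/
def domOp (A : X → Set (StrongDual ℝ X)) : Set X := {x | (A x).Nonempty}

/-- `A` is a monotone operator. -/
def IsMonotoneOp (A : X → Set (StrongDual ℝ X)) : Prop :=
  ∀ p ∈ gra A, ∀ q ∈ gra A, 0 ≤ (p.2 - q.2) (p.1 - q.1)

/-- `A` is maximally monotone: it is monotone and has no proper monotone extension. -/
def IsMaxMonotoneOp (A : X → Set (StrongDual ℝ X)) : Prop :=
  IsMonotoneOp A ∧
    ∀ B : X → Set (StrongDual ℝ X), IsMonotoneOp B → gra A ⊆ gra B → gra B = gra A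

/-- `A` is a linear relation: its graph is a linear subspace of `X × X*`. -/
def IsLinearRelation (A : X → Set (StrongDual ℝ X)) : Prop :=
  ∃ S : Submodule ℝ (X × StrongDual ℝ X), (S : Set (X × StrongDual ℝ X)) = gra A

/-- The pointwise (Minkowski) sum of two set-valued operators. -/
def opSum (A B : X → Set (StrongDual ℝ X)) : X → Set (StrongDual ℝ X) := fun x => A x + B x

/-- Effective domain of an extended-real-valued function. -/
def fdom (f : X → EReal) : Set X := {x | f x ≠ ⊤}

/-- `f` is proper: not identically `+∞` and never `-∞`. -/
def EProper (f : X → EReal) : Prop := (∃ x, f x ≠ ⊤) ∧ ∀ x, f x ≠ ⊥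

/-- Convexity of an extended-real-valued function. -/
def EConvex (f : X → EReal) : Prop :=
  ∀ x y : X, ∀ t : ℝ, 0 ≤ t → t ≤ 1 →
    f (t • x + (1 - t) • y) ≤ (t : EReal) * f x + ((1 - t : ℝ) : EReal) * f y

/-- The subdifferential of `f`. -/
def subdiff (f : X → EReal) : X → Set (StrongDual ℝ X) :=
  fun x => {xs | ∀ y : X, ((xs (y - x) : ℝ) : EReal) + f x ≤ f y}

/-- The Fitzpatrick function of a set-valued operator. -/
noncomputable def fitz (A : X → Set (StrongDual ℝ X)) : X × StrongDual ℝ X → EReal :=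
  fun p => ⨆ q ∈ gra A, ((p.2 q.1 + q.2 p.1 - q.2 q.1 : ℝ) : EReal)

/-- `(x,x*)` is monotonically related to a set `G ⊆ X × X*`. -/
def MonRel (p : X × StrongDual ℝ X) (G : Set (X × StrongDual ℝ X)) : Prop :=
  ∀ q ∈ G, 0 ≤ (p.2 - q.2) (p.1 - q.1)

/-- A maximally monotone operator is of type (FPV). -/
def IsFPVOp (A : X → Set (StrongDual ℝ X)) : Prop :=
  IsMaxMonotoneOp A ∧
    ∀ U : Set X, IsOpen U → Convex ℝ U → (U ∩ domOp A).Nonempty →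
      ∀ p : X × StrongDual ℝ X, p.1 ∈ U →
        MonRel p (gra A ∩ U ×ˢ (univ : Set (StrongDual ℝ X))) → p ∈ gra A

/-- The normal cone operator of a set `C`. -/
def normalCone (C : Set X) : X → Set (StrongDual ℝ X) :=
  fun x => {xs | x ∈ C ∧ ∀ c ∈ C, xs (c - x) ≤ 0}

/-!
Test the supremum defining `F_{A+∂f}(tz, tz*)` at the points `(ta, ta* + b)` with
`(a, a*) ∈ gra A` and `b ∈ ∂f(ta)`: the value there is
`t²⟨z, z*⟩ + t²⟨a - z, z*⟩ - t²⟨a - z, a*⟩ + t⟨z - a, b⟩`.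
Since `tz ∈ int dom f`, Baire's theorem makes `f` continuous near `tz`, and supporting hyperplanes
to the epigraph then give subgradients of bounded norm near `tz`; so the last term is small when
`a` is close to `z`. For `z ∈ cl dom A \ dom A` there are `(a, a*) ∈ gra A` with `a` arbitrarily
close to `z` and `⟨a - z, a*⟩` arbitrarily small: otherwise separating
`{(a, r) | ⟨a - z, a*⟩ ≤ r}` (convex because `A` is a monotone linear relation) from a
neighbourhood of `(z, 0)` in `X × ℝ` produces a point `(z, v) ∉ gra A` monotonically related to
`gra A`, contradicting maximality.
-/

open Metric Filter Topology

theorem ContinuousLinearMap.apply_prodMk_real {E : Type*} [AddCommGroup E] [Module ℝ E]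
    [TopologicalSpace E] (g : StrongDual ℝ (E × ℝ)) (x : E) (r : ℝ) :
    g (x, r) = g (x, 0) + r * g (0, 1) := by
  rw [← smul_eq_mul, ← map_smul, ← map_add]
  simp

theorem LowerSemicontinuous.exists_eventually_le {Y : Type*} [TopologicalSpace Y]
    [BaireSpace Y] {f : Y → EReal} (hlsc : LowerSemicontinuous f) {U : Set Y} (hU : IsOpen U)
    (hUne : U.Nonempty) (hUf : ∀ x ∈ U, f x ≠ ⊤) : ∃ y ∈ U, ∃ N : ℝ, ∀ᶠ x in 𝓝 y, f x ≤ N := by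
  set F : ℕ → Set Y := fun n => f ⁻¹' Iic (n : ℝ) ∪ Uᶜ
  have hF : ⋃ n, F n = univ := by
    refine eq_univ_of_forall fun x => ?_
    by_cases hx : x ∈ U
    · obtain ⟨s, hs, -⟩ := EReal.exists_between_coe_real (lt_top_iff_ne_top.2 (hUf x hx))
      obtain ⟨n, hn⟩ := exists_nat_ge s
      exact mem_iUnion.2 ⟨n, Or.inl (hs.le.trans (EReal.coe_le_coe_iff.2 hn))⟩
    · exact mem_iUnion.2 ⟨0, Or.inr hx⟩
  have hdense := dense_iUnion_interior_of_closed
    (fun n => (hlsc.isClosed_preimage _).union hU.isClosed_compl) hF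
  obtain ⟨y, hyU, hy⟩ := hdense.inter_open_nonempty U hU hUne
  obtain ⟨n, hn⟩ := mem_iUnion.1 hy
  refine ⟨y, hyU, n, ?_⟩
  filter_upwards [mem_interior_iff_mem_nhds.1 hn, hU.mem_nhds hyU] with x hxF hxU
  exact hxF.resolve_right (not_not.2 hxU)

section ConvexFunction

variable {f : X → EReal}

theorem EConvex.le_coe_combo (hf : EConvex f) {x y : X} {s s' t : ℝ} (hx : f x ≤ s)
    (hy : f y ≤ s') (ht₀ : 0 ≤ t) (ht₁ : t ≤ 1) :
    f (t • x + (1 - t) • y) ≤ ((t * s + (1 - t) * s' : ℝ) : EReal) := by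
  calc f (t • x + (1 - t) • y) ≤ (t : EReal) * f x + ((1 - t : ℝ) : EReal) * f y :=
        hf x y t ht₀ ht₁
    _ ≤ (t : EReal) * s + ((1 - t : ℝ) : EReal) * s' := by gcongr
    _ = ((t * s + (1 - t) * s' : ℝ) : EReal) := by norm_cast

theorem EConvex.convex_epigraph (hf : EConvex f) : Convex ℝ {p : X × ℝ | f p.1 ≤ p.2} := by
  intro p hp q hq a b ha hb hab
  obtain rfl : b = 1 - a := by linarith
  exact hf.le_coe_combo hp hq ha (by linarith)

theorem EConvex.convex_fdom (hf : EConvex f) : Convex ℝ (fdom f) := by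
  have : fdom f = Prod.fst '' {p : X × ℝ | f p.1 ≤ p.2} := by
    ext x
    refine ⟨fun hx => ?_, ?_⟩
    · obtain ⟨s, hs, -⟩ := EReal.exists_between_coe_real (lt_top_iff_ne_top.2 hx)
      exact ⟨(x, s), hs.le, rfl⟩
    · rintro ⟨p, hp, rfl⟩
      exact ne_top_of_le_ne_top (EReal.coe_ne_top _) hp
  rw [this]
  exact hf.convex_epigraph.linear_image (LinearMap.fst ℝ X ℝ)

theorem EConvex.convexOn_toReal (hf : EConvex f) (hbot : ∀ x, f x ≠ ⊥) :
    ConvexOn ℝ (fdom f) (fun x => (f x).toReal) := by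
  refine ⟨hf.convex_fdom, fun x hx y hy a b ha hb hab => ?_⟩
  obtain rfl : b = 1 - a := by linarith
  have hle := hf.le_coe_combo (EReal.coe_toReal hx (hbot x)).ge
    (EReal.coe_toReal hy (hbot y)).ge ha (by linarith)
  simpa only [EReal.toReal_coe, smul_eq_mul] using
    EReal.toReal_le_toReal hle (hbot _) (EReal.coe_ne_top _)

theorem EConvex.continuousOn_toReal_interior_fdom [CompleteSpace X] (hf : EConvex f)
    (hbot : ∀ x, f x ≠ ⊥) (hlsc : LowerSemicontinuous f) :
    ContinuousOn (fun x => (f x).toReal) (interior (fdom f)) := by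
  obtain hempty | hne := (interior (fdom f)).eq_empty_or_nonempty
  · simp [hempty]
  obtain ⟨y, hy, N, hN⟩ :=
    hlsc.exists_eventually_le isOpen_interior hne fun x hx => interior_subset hx
  have hbdd : (𝓝 y).IsBoundedUnder (· ≤ ·) (fun x => (f x).toReal) :=
    isBoundedUnder_of_eventually_le (a := N) <| hN.mono fun x hx =>
      by simpa using EReal.toReal_le_toReal hx (hbot x) (EReal.coe_ne_top N)
  have hconv := (hf.convexOn_toReal hbot).subset interior_subset hf.convex_fdom.interior
  have htfae := (hconv.continuousOn_tfae isOpen_interior hne).out 3 1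
  exact htfae.1 ⟨y, hy, hbdd⟩

theorem EConvex.subdiff_nonempty (hf : EConvex f) {x : X} {a N : ℝ} (hfx : f x = a)
    (hN : ∀ᶠ y in 𝓝 x, f y ≤ N) : (subdiff f x).Nonempty := by
  set epi := {p : X × ℝ | f p.1 ≤ p.2}
  obtain ⟨U, hUN, hUo, hxU⟩ := _root_.eventually_nhds_iff.1 hN
  have hUepi : U ×ˢ Ioi N ⊆ interior epi :=
    interior_maximal (fun p hp => (hUN _ hp.1).trans (EReal.coe_le_coe_iff.2 (le_of_lt hp.2)))
      (hUo.prod isOpen_Ioi)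
  have hxa : (x, a) ∉ interior epi := by
    intro h
    have hev : ∀ᶠ s in 𝓝 a, (x, s) ∈ epi :=
      (Continuous.prodMk_right x).continuousAt.preimage_mem_nhds (mem_interior_iff_mem_nhds.1 h)
    obtain ⟨s, hsa, hs⟩ := hev.exists_lt
    have : (a : EReal) ≤ s := hfx ▸ hs
    exact (EReal.coe_le_coe_iff.1 this).not_gt hsa
  obtain ⟨g, hg⟩ := geometric_hahn_banach_open_point hf.convex_epigraph.interior isOpen_interior hxa
  have hepi : ∀ p ∈ epi, g p ≤ g (x, a) := by
    have hne : (interior epi).Nonempty := ⟨(x, N + 1), hUepi ⟨hxU, by simp⟩⟩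
    refine fun p hp => closure_minimal (fun q hq => (hg q hq).le)
      (isClosed_le g.continuous continuous_const) ?_
    rw [hf.convex_epigraph.closure_interior_eq_closure_of_nonempty_interior hne]
    exact subset_closure hp
  set w := g.comp (ContinuousLinearMap.inl ℝ X ℝ)
  have hgw : ∀ y r, g (y, r) = w y + r * g (0, 1) := g.apply_prodMk_real
  have hneg : g (0, 1) < 0 := by
    have := hg (x, max N a + 1) (hUepi ⟨hxU, (le_max_left N a).trans_lt (lt_add_one _)⟩)
    rw [hgw x, hgw x] at this
    nlinarith [le_max_right N a]
  refine ⟨(-g (0, 1))⁻¹ • w, fun y => ?_⟩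
  refine EReal.le_of_forall_lt_iff_le.1 fun s hs => ?_
  have := hepi (y, s) hs.le
  rw [hgw y, hgw x] at this
  have hb : ((-g (0, 1))⁻¹ • w) (y - x) ≤ s - a := by
    rw [smul_apply, map_sub, smul_eq_mul, inv_mul_le_iff₀ (by linarith)]
    nlinarith
  rw [hfx]
  exact_mod_cast (by linarith : ((-g (0, 1))⁻¹ • w) (y - x) + a ≤ s)

theorem norm_le_of_mem_subdiff {x : X} {b : StrongDual ℝ X} {a N r : ℝ} (hb : b ∈ subdiff f x)
    (hfx : f x = a) (hr : 0 < r) (hN : ∀ y ∈ closedBall x r, f y ≤ N) : ‖b‖ ≤ (N - a) / r := by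
  have hle : ∀ v ∈ closedBall (0 : X) r, b v ≤ N - a := fun v hv => by
    have := (hb (x + v)).trans (hN _ (by simpa using hv))
    rw [hfx, add_sub_cancel_left] at this
    have : b v + a ≤ N := by exact_mod_cast this
    linarith
  refine b.opNorm_bound_of_ball_bound hr _ fun v hv => ?_
  have hneg := hle (-v) (by simpa using hv)
  rw [map_neg] at hneg
  exact abs_le.2 ⟨by linarith, hle v hv⟩

theorem EConvex.exists_subdiff_norm_le_on_ball [CompleteSpace X] (hf : EConvex f)
    (hbot : ∀ x, f x ≠ ⊥) (hlsc : LowerSemicontinuous f) {x₀ : X}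
    (hx₀ : x₀ ∈ interior (fdom f)) :
    ∃ ρ > 0, ∃ M ≥ 0, ∀ x ∈ ball x₀ ρ, ∃ b ∈ subdiff f x, ‖b‖ ≤ M := by
  set g := fun x => (f x).toReal
  have hcont : ContinuousAt g x₀ :=
    (hf.continuousOn_toReal_interior_fdom hbot hlsc).continuousAt (isOpen_interior.mem_nhds hx₀)
  obtain ⟨ρ, hρ, hball⟩ := eventually_nhds_iff_ball.1
    (Filter.Eventually.and (mem_interior_iff_mem_nhds.1 hx₀)
      (hcont.eventually (ball_mem_nhds _ one_pos)))
  have hfg : ∀ y ∈ fdom f, f y = g y := fun y hy => (EReal.coe_toReal hy (hbot y)).symm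
  refine ⟨ρ / 2, half_pos hρ, 4 / ρ, by positivity, fun x hx => ?_⟩
  have hsub : closedBall x (ρ / 2) ⊆ ball x₀ ρ :=
    closedBall_subset_ball' (by linarith [mem_ball.1 hx])
  have hN : ∀ y ∈ closedBall x (ρ / 2), f y ≤ ↑(g x₀ + 1) := fun y hy => by
    obtain ⟨hydom, hy1⟩ := hball y (hsub hy)
    rw [hfg y hydom, EReal.coe_le_coe_iff]
    linarith [abs_lt.1 (Real.dist_eq _ _ ▸ hy1)]
  obtain ⟨hxdom, hx1⟩ := hball x (ball_subset_ball (half_le_self hρ.le) hx)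
  obtain ⟨b, hb⟩ := hf.subdiff_nonempty (hfg x hxdom)
    (eventually_of_mem (closedBall_mem_nhds x (half_pos hρ)) hN)
  refine ⟨b, hb, (norm_le_of_mem_subdiff hb (hfg x hxdom) (half_pos hρ) hN).trans ?_⟩
  calc (g x₀ + 1 - g x) / (ρ / 2) ≤ 2 / (ρ / 2) := by
        gcongr
        linarith [abs_lt.1 (Real.dist_eq _ _ ▸ hx1)]
    _ = 4 / ρ := by ring

end ConvexFunction

section MonotoneOperator

variable {A : X → Set (StrongDual ℝ X)}

theorem pairing_sub_comm (p q : X × StrongDual ℝ X) :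
    (p.2 - q.2) (p.1 - q.1) = (q.2 - p.2) (q.1 - p.1) := by
  simp only [sub_apply, map_sub]
  ring

theorem IsMaxMonotoneOp.mem_gra_of_monRel (hA : IsMaxMonotoneOp A) {p : X × StrongDual ℝ X}
    (hp : MonRel p (gra A)) : p ∈ gra A := by
  set B : X → Set (StrongDual ℝ X) := fun x => A x ∪ {xs | (x, xs) = p}
  have hAB : gra A ⊆ gra B := fun q hq => Or.inl hq
  have hB : IsMonotoneOp B := by
    rintro q (hq | hq) q' (hq' | hq')
    · exact hA.1 q hq q' hq'
    · obtain rfl : q' = p := hq'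
      exact pairing_sub_comm q' q ▸ hp q hq
    · obtain rfl : q = p := hq
      exact hp q' hq'
    · obtain rfl : q = p := hq
      obtain rfl : q' = q := hq'
      simp
  exact hA.2 B hB hAB ▸ Or.inr rfl

theorem IsMonotoneOp.convexOn_apply_sub (hA : IsMonotoneOp A) (hc : Convex ℝ (gra A)) (z : X) :
    ConvexOn ℝ (gra A) fun p => p.2 (p.1 - z) := by
  refine ⟨hc, fun p hp q hq a b ha hb hab => ?_⟩
  have hmono := hA p hp q hq
  obtain rfl : b = 1 - a := by linarith
  simp only [Prod.fst_add, Prod.snd_add, Prod.smul_fst, Prod.smul_snd, smul_eq_mul,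
    add_apply, smul_apply, sub_apply, map_add, map_sub, map_smul] at hmono ⊢
  nlinarith [mul_nonneg (mul_nonneg ha hb) hmono]

theorem IsMaxMonotoneOp.exists_mem_gra_apply_sub_lt (hA : IsMaxMonotoneOp A)
    (hc : Convex ℝ (gra A)) {z : X} (hz : z ∈ closure (domOp A)) (hzA : z ∉ domOp A)
    {δ ε : ℝ} (hδ : 0 < δ) (hε : 0 < ε) :
    ∃ p ∈ gra A, ‖p.1 - z‖ < δ ∧ p.2 (p.1 - z) < ε := by
  by_contra! h
  set C : Set (X × ℝ) := (LinearMap.fst ℝ X (StrongDual ℝ X)).prodMap LinearMap.id ''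
    {q | q.1 ∈ gra A ∧ q.1.2 (q.1.1 - z) ≤ q.2}
  have hC : Convex ℝ C := (hA.1.convexOn_apply_sub hc z).convex_epigraph.linear_image _
  have hdisj : Disjoint (ball z δ ×ˢ Iio ε) C := by
    rw [Set.disjoint_left]
    rintro _ ⟨hx, hr⟩ ⟨⟨p, r⟩, ⟨hp, hpr⟩, rfl⟩
    exact (h p hp (mem_ball_iff_norm.1 hx)).not_gt (hpr.trans_lt hr)
  obtain ⟨g, u, hgu, hug⟩ := geometric_hahn_banach_open ((convex_ball z δ).prod (convex_Iio ε))
    (isOpen_ball.prod isOpen_Iio) hC hdisj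
  set w := g.comp (ContinuousLinearMap.inl ℝ X ℝ)
  have hgw : ∀ y r, g (y, r) = w y + r * g (0, 1) := g.apply_prodMk_real
  have hzu : w z < u := by
    simpa [hgw z] using hgu (z, 0) ⟨mem_ball_self hδ, hε⟩
  have hgA : ∀ q ∈ gra A, u ≤ w q.1 + q.2 (q.1 - z) * g (0, 1) := fun q hq =>
    (hug _ ⟨(q, _), ⟨hq, le_rfl⟩, rfl⟩).trans_eq (hgw _ _)
  have hs : 0 ≤ g (0, 1) := by
    by_contra! hs
    set r := min 0 ((u - w z) / g (0, 1))
    have hr := hgu (z, r) ⟨mem_ball_self hδ, (min_le_left _ _).trans_lt hε⟩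
    have := (le_div_iff_of_neg hs).1 (min_le_right 0 ((u - w z) / g (0, 1)))
    rw [hgw z] at hr
    linarith
  rcases hs.eq_or_lt with hs | hs
  · have hdom : domOp A ⊆ {y | u ≤ w y} := fun y ⟨ys, hys⟩ => by
      simpa [← hs] using hgA (y, ys) hys
    exact (closure_minimal hdom (isClosed_le continuous_const w.continuous) hz).not_gt hzu
  · refine hzA ⟨-(g (0, 1))⁻¹ • w, hA.mem_gra_of_monRel (p := (z, _)) fun q hq => ?_⟩
    have := hgA q hq
    rw [map_sub] at this
    simp only [sub_apply, smul_apply, map_sub, smul_eq_mul]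
    rw [← mul_nonneg_iff_of_pos_left hs]
    field_simp
    linarith

end MonotoneOperator

theorem le_fitz {B : X → Set (StrongDual ℝ X)} {q : X × StrongDual ℝ X} (hq : q ∈ gra B)
    (p : X × StrongDual ℝ X) : ((p.2 q.1 + q.2 p.1 - q.2 q.1 : ℝ) : EReal) ≤ fitz B p :=
  le_iSup₂ (f := fun q (_ : q ∈ gra B) => ((p.2 q.1 + q.2 p.1 - q.2 q.1 : ℝ) : EReal)) q hq

theorem le_fitz_opSum_subdiff {A : X → Set (StrongDual ℝ X)} {f : X → EReal} {t : ℝ} {z : X}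
    {zs b : StrongDual ℝ X} {p : X × StrongDual ℝ X} (hp : t • p ∈ gra A)
    (hb : b ∈ subdiff f (t • p.1)) :
    ((t ^ 2 * zs z + t ^ 2 * zs (p.1 - z) - t ^ 2 * p.2 (p.1 - z) + t * b (z - p.1) : ℝ) : EReal)
      ≤ fitz (opSum A (subdiff f)) (t • z, t • zs) := by
  have hq : (t • p.1, t • p.2 + b) ∈ gra (opSum A (subdiff f)) := Set.add_mem_add hp hb
  refine le_of_eq_of_le ?_ (le_fitz hq _)
  congr 1
  simp only [add_apply, smul_apply, map_sub, map_smul, smul_eq_mul]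
  ring

/-- If `A` is a maximally monotone linear relation, `f` is proper lsc convex with
`0 ∈ dom A ∩ int dom f`, and `z ∈ closure (dom A) \ dom A` with `z ∈ closure (dom f)`,
then `F_{A+∂f}(tz, tz*) ≥ t²⟨z,z*⟩` for every `z*` and every `t ∈ (0,1)`. -/
theorem fitz_scaled_ge
    {X : Type*} [NormedAddCommGroup X] [NormedSpace ℝ X] [CompleteSpace X]
    (A : X → Set (StrongDual ℝ X)) (hA : IsMaxMonotoneOp A) (hAlin : IsLinearRelation A)
    (f : X → EReal) (hproper : EProper f) (hconv : EConvex f)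
    (hlsc : LowerSemicontinuous f)
    (h0 : (0 : X) ∈ domOp A ∩ interior (fdom f))
    (z : X) (hz₁ : z ∈ closure (domOp A)) (hz₂ : z ∉ domOp A)
    (hz₃ : z ∈ closure (fdom f)) :
    ∀ zs : StrongDual ℝ X, ∀ t : ℝ, 0 < t → t < 1 →
      ((t ^ 2 * zs z : ℝ) : EReal) ≤ fitz (opSum A (subdiff f)) (t • z, t • zs) := by
  intro zs t ht₀ ht₁
  obtain ⟨S, hS⟩ := hAlin
  have htz : t • z ∈ interior (fdom f) := by
    simpa using hconv.convex_fdom.combo_interior_closure_mem_interior h0.2 hz₃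
      (sub_pos.2 ht₁) ht₀.le (sub_add_cancel 1 t)
  obtain ⟨ρ, hρ, M, hM, hsub⟩ := hconv.exists_subdiff_norm_le_on_ball hproper.2 hlsc htz
  refine EReal.ge_of_forall_gt_iff_ge.1 fun c hc => ?_
  have hε : 0 < t ^ 2 * zs z - c := sub_pos.2 (EReal.coe_lt_coe_iff.1 hc)
  obtain ⟨δ, hδ, hδε⟩ := exists_pos_mul_lt (half_pos hε) (‖zs‖ + M)
  obtain ⟨p, hp, hpz, hpε⟩ := hA.exists_mem_gra_apply_sub_lt (hS ▸ S.convex) hz₁ hz₂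
    (lt_min hδ hρ) (half_pos hε)
  obtain ⟨b, hb, hbM⟩ := hsub (t • p.1) <| by
    rw [mem_ball_iff_norm, ← smul_sub, norm_smul, Real.norm_of_nonneg ht₀.le]
    nlinarith [min_le_right δ ρ, norm_nonneg (p.1 - z)]
  have htp : t • p ∈ gra A := by
    rw [← hS] at hp ⊢
    exact S.smul_mem t hp
  refine (EReal.coe_le_coe_iff.2 ?_).trans (le_fitz_opSum_subdiff htp hb)
  have hzs : |zs (p.1 - z)| ≤ ‖zs‖ * δ :=
    (zs.le_opNorm _).trans (by gcongr; exact hpz.le.trans (min_le_left _ _))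
  have hbz : |b (z - p.1)| ≤ M * δ :=
    (b.le_opNorm _).trans (by rw [norm_sub_rev]; gcongr; exact hpz.le.trans (min_le_left _ _))
  have ht2 : t ^ 2 ≤ 1 := by nlinarith
  nlinarith [mul_le_mul_of_nonneg_left (abs_le.1 hzs).1 (sq_nonneg t),
    mul_le_mul_of_nonneg_left hpε.le (sq_nonneg t),
    mul_le_mul_of_nonneg_left (abs_le.1 hbz).1 ht₀.le,
    mul_nonneg (mul_nonneg (norm_nonneg zs) hδ.le) (sub_nonneg.2 ht2),
    mul_nonneg (mul_nonneg hM hδ.le) (sub_nonneg.2 ht₁.le)]
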